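/- Rao Bound: any code C ⊆ F_q^n that is an orthogonal array of strength τ = 2k (equivalently, has dual distance d' ≥ 2k+1) satisfies |C| ≥ Σ_{i=0}^{k} C(n,i)(q-1)^i. -/

import Mathlib

/-!
Let `ψ` be a primitive additive character of `ZMod q` and `S u = ∑ x ∈ C, ψ (u ⬝ᵥ x)`.
Expanding the weight enumerator `∑ u, ψ (u ⬝ᵥ z) X ^ (n - wt u)` as a product over the
coordinates shows that the sum of `ψ (u ⬝ᵥ z)` over the vectors `u` of weight `i` is the
Krawtchouk value `K_i (wt z)`. Hence `∑_{wt u = i} |S u|² = |C|² B'_i`, so the design condition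
forces `S u = 0` whenever `1 ≤ wt u ≤ 2k`. Then the characters `x ↦ ψ (u ⬝ᵥ x)` with `wt u ≤ k`
are pairwise orthogonal on `C`, hence linearly independent in `ℂ^C`, and there are
`∑_{i ≤ k} C(n,i) (q-1)^i` of them.
-/

open Finset

/-- Generalized binomial coefficient `C(z, j) = z(z-1)⋯(z-j+1)/j!` for real `z`. -/
noncomputable def realChoose (z : ℝ) (j : ℕ) : ℝ :=
  (∏ k ∈ Finset.range j, (z - k)) / (Nat.factorial j)

/-- The Krawtchouk polynomial `K_i^{(n,q)}(z)`. -/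
noncomputable def kraw (n q i : ℕ) (z : ℝ) : ℝ :=
  ∑ j ∈ Finset.range (i + 1),
    (-1 : ℝ) ^ j * ((q : ℝ) - 1) ^ (i - j) * (q : ℝ) ^ j *
      ((n - j).choose (n - i) : ℝ) * realChoose z j

/-- The distance distribution `B_i` of a code `C ⊆ F_q^n`. -/
noncomputable def distDistrib {n q : ℕ} (C : Finset (Fin n → Fin q)) (i : ℕ) : ℝ :=
  (((C ×ˢ C).filter (fun p => hammingDist p.1 p.2 = i)).card : ℝ) / (C.card : ℝ)

/-- The dual distance distribution (MacWilliams transform) `B'_i` of a code. -/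
noncomputable def dualDistDistrib {n q : ℕ} (C : Finset (Fin n → Fin q)) (i : ℕ) : ℝ :=
  (∑ j ∈ Finset.range (n + 1), distDistrib C j * kraw n q i j) / (C.card : ℝ)

open Finset Polynomial

lemma realChoose_natCast (d j : ℕ) : realChoose d j = d.choose j := by
  rw [realChoose, ← descPochhammer_eval_eq_prod_range, Nat.cast_choose_eq_descPochhammer_div]

lemma kraw_natCast_eq_coeff {n q i d : ℕ} (hi : i ≤ n) (hd : d ≤ n) :
    (kraw n q i d : ℂ) = ((X - 1) ^ d * (X + C ((q : ℂ) - 1)) ^ (n - d)).coeff (n - i) := by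
  set T : ℕ → ℂ := fun j ↦
    (-1) ^ j * ((q : ℂ) - 1) ^ (i - j) * (q : ℂ) ^ j * ((n - j).choose (n - i) : ℂ) * d.choose j
  have hexpand : (X - 1 : ℂ[X]) ^ d * (X + C ((q : ℂ) - 1)) ^ (n - d)
      = ∑ j ∈ range (d + 1), C ((-q : ℂ) ^ j * d.choose j) * (X + C ((q : ℂ) - 1)) ^ (n - j) := by
    rw [show (X - 1 : ℂ[X]) = C (-q : ℂ) + (X + C ((q : ℂ) - 1)) by simp; ring, add_pow, sum_mul]
    refine sum_congr rfl fun j hj ↦ ?_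
    rw [mem_range] at hj
    rw [show n - j = d - j + (n - d) by omega, pow_add]
    simp only [C_mul, C_pow, map_natCast]
    ring
  have hvanish : ∀ j ∈ range (n + 1), j ∉ range (i + 1) ∨ j ∉ range (d + 1) → T j = 0 := by
    intro j hj hout
    simp only [mem_range] at hj hout
    rcases hout with hji | hjd
    · simp [T, Nat.choose_eq_zero_of_lt (by omega : n - j < n - i)]
    · simp [T, Nat.choose_eq_zero_of_lt (by omega : d < j)]
  calc (kraw n q i d : ℂ) = ∑ j ∈ range (i + 1), T j := by
        simp only [kraw, realChoose_natCast, T]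
        push_cast
        rfl
    _ = ∑ j ∈ range (d + 1), T j := by
        rw [sum_subset (range_subset_range.2 (by omega : i + 1 ≤ n + 1))
            fun j hj hji ↦ hvanish j hj (.inl hji),
          sum_subset (range_subset_range.2 (by omega : d + 1 ≤ n + 1))
            fun j hj hjd ↦ hvanish j hj (.inr hjd)]
    _ = _ := by
        rw [hexpand, finsetSum_coeff]
        refine sum_congr rfl fun j hj ↦ ?_
        rw [mem_range] at hj
        rw [coeff_C_mul, coeff_X_add_C_pow]
        rcases le_or_gt j i with hji | hji
        · rw [show n - j - (n - i) = i - j by omega, neg_pow]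
          ring
        · simp [T, Nat.choose_eq_zero_of_lt (by omega : n - j < n - i)]

section WeightEnumerator

variable {α S : Type*} [DecidableEq α] [Zero α] {n : ℕ}

lemma card_filter_eq_zero_eq_sub_hammingNorm (u : Fin n → α) :
    #{t | u t = 0} = n - hammingNorm u := by
  have := card_filter_add_card_filter_not (s := univ) (fun t ↦ u t = 0)
  rw [card_univ, Fintype.card_fin] at this
  simp only [hammingNorm, ne_eq]
  omega

variable [Fintype α] [CommRing S]

lemma sum_C_prod_mul_X_pow_sub_hammingNorm (g : Fin n → α → S) :
    ∑ u : Fin n → α, C (∏ t, g t (u t)) * X ^ (n - hammingNorm u)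
      = ∏ t, (C (∑ c, g t c) + C (g t 0) * (X - 1)) := by
  have hfactor : ∀ t, C (∑ c, g t c) + C (g t 0) * (X - 1)
      = ∑ c, C (g t c) * if c = 0 then X else 1 := by
    intro t
    simp_rw [show ∀ c : α, (if c = 0 then X else 1 : S[X]) = 1 + if c = 0 then X - 1 else 0 by
      intro c; split_ifs <;> ring, mul_add, mul_one, sum_add_distrib, mul_ite, mul_zero,
      sum_ite_eq', mem_univ, if_true, map_sum]
  simp_rw [hfactor, Fintype.prod_sum]
  refine sum_congr rfl fun u _ ↦ ?_
  rw [prod_mul_distrib, map_prod, prod_ite, prod_const, prod_const_one, mul_one,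
    card_filter_eq_zero_eq_sub_hammingNorm]

lemma coeff_sum_C_mul_X_pow_sub_hammingNorm (a : (Fin n → α) → S) {i : ℕ} (hi : i ≤ n) :
    (∑ u : Fin n → α, C (a u) * X ^ (n - hammingNorm u)).coeff (n - i)
      = ∑ u with hammingNorm u = i, a u := by
  rw [finsetSum_coeff, sum_filter]
  refine sum_congr rfl fun u _ ↦ ?_
  have hu : hammingNorm u ≤ n := by simpa using hammingNorm_le_card_fintype (x := u)
  rw [coeff_C_mul_X_pow]
  exact if_congr (by omega) rfl rfl

lemma card_hammingNorm_eq (i : ℕ) :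
    #{u : Fin n → α | hammingNorm u = i} = n.choose i * (Fintype.card α - 1) ^ i := by
  rcases le_or_gt i n with hi | hi
  · have hq : 1 ≤ Fintype.card α := Fintype.card_pos
    have hfactor : C (∑ _ : α, (1 : ℤ)) + C 1 * (X - 1) = X + C ((Fintype.card α : ℤ) - 1) := by
      simp only [sum_const, card_univ, nsmul_eq_mul, mul_one, map_natCast, map_one, one_mul,
        map_sub]
      ring
    have h := congrArg (·.coeff (n - i))
      (sum_C_prod_mul_X_pow_sub_hammingNorm (S := ℤ) (n := n) fun _ (_ : α) ↦ 1)
    simp only [prod_const_one, hfactor, prod_const, card_univ, Fintype.card_fin] at h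
    rw [coeff_sum_C_mul_X_pow_sub_hammingNorm _ hi, sum_const, nsmul_eq_mul, mul_one,
      coeff_X_add_C_pow, show n - (n - i) = i by omega, Nat.choose_symm hi] at h
    apply Nat.cast_injective (R := ℤ)
    rw [h, Nat.cast_mul, Nat.cast_pow, Nat.cast_sub hq, Nat.cast_one, mul_comm]
  · rw [Nat.choose_eq_zero_of_lt hi, zero_mul, card_eq_zero, filter_eq_empty_iff]
    intro u _ hu
    have := hammingNorm_le_card_fintype (x := u)
    rw [Fintype.card_fin] at this
    omega

lemma card_hammingNorm_le (k : ℕ) :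
    #{u : Fin n → α | hammingNorm u ≤ k}
      = ∑ i ∈ range (k + 1), n.choose i * (Fintype.card α - 1) ^ i := by
  rw [card_eq_sum_card_fiberwise (f := hammingNorm) (t := range (k + 1))
    fun u hu ↦ by simpa [Nat.lt_succ_iff] using hu]
  refine sum_congr rfl fun i hi ↦ ?_
  rw [← card_hammingNorm_eq, filter_filter]
  congr 1
  exact filter_congr fun u _ ↦ by simp only [mem_range] at hi; omega

end WeightEnumerator

section Characters

open Matrix

lemma AddChar.map_dotProduct {ι R M : Type*} [Fintype ι] [NonUnitalNonAssocSemiring R]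
    [CommMonoid M] (ψ : AddChar R M) (u z : ι → R) :
    ψ (u ⬝ᵥ z) = ∏ t, ψ (u t * z t) :=
  map_prod ψ.toMonoidHom (fun t ↦ Multiplicative.ofAdd (u t * z t)) univ

variable {R : Type*} [CommRing R] [Fintype R] [DecidableEq R] {n : ℕ}

theorem sum_addChar_dotProduct_eq_kraw {ψ : AddChar R ℂ} (hψ : ψ.IsPrimitive) (z : Fin n → R)
    {i : ℕ} (hi : i ≤ n) :
    ∑ u with hammingNorm u = i, ψ (u ⬝ᵥ z) = kraw n (Fintype.card R) i (hammingNorm z) := by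
  have hz : hammingNorm z ≤ n := by simpa using hammingNorm_le_card_fintype (x := z)
  have hfactor : ∀ t, C (∑ c, ψ (c * z t)) + C (ψ (0 * z t)) * (X - 1)
      = if z t = 0 then X + C ((Fintype.card R : ℂ) - 1) else X - 1 := by
    intro t
    rw [AddChar.sum_mulShift _ hψ, zero_mul, AddChar.map_zero_eq_one]
    split_ifs
    · simp only [map_natCast, map_one, one_mul, map_sub]
      ring
    · simp only [CharP.cast_eq_zero, map_zero, map_one, one_mul, zero_add]
  rw [kraw_natCast_eq_coeff hi hz, ← coeff_sum_C_mul_X_pow_sub_hammingNorm _ hi]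
  simp_rw [AddChar.map_dotProduct]
  rw [sum_C_prod_mul_X_pow_sub_hammingNorm (fun t c ↦ ψ (c * z t))]
  simp_rw [hfactor]
  rw [prod_ite, prod_const, prod_const, mul_comm, card_filter_eq_zero_eq_sub_hammingNorm]
  rfl

end Characters

section Code

open Matrix

variable {R : Type*} [CommRing R] {n : ℕ}

/-- The Fourier transform of the indicator function of `C`. -/
noncomputable def charSum (ψ : AddChar R ℂ) (C : Finset (Fin n → R)) (u : Fin n → R) : ℂ :=
  ∑ x ∈ C, ψ (u ⬝ᵥ x)

lemma charSum_zero (ψ : AddChar R ℂ) (C : Finset (Fin n → R)) : charSum ψ C 0 = #C := by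
  simp [charSum]

noncomputable def charVec (ψ : AddChar R ℂ) (C : Finset (Fin n → R)) (u : Fin n → R) :
    EuclideanSpace ℂ C :=
  WithLp.toLp 2 fun x ↦ ψ (u ⬝ᵥ x)

lemma normSq_charSum [Finite R] (ψ : AddChar R ℂ) (C : Finset (Fin n → R)) (u : Fin n → R) :
    (Complex.normSq (charSum ψ C u) : ℂ) = ∑ x ∈ C, ∑ y ∈ C, ψ (u ⬝ᵥ (x - y)) := by
  rw [← Complex.mul_conj, charSum, map_sum, sum_mul_sum]
  refine sum_congr rfl fun x _ ↦ sum_congr rfl fun y _ ↦ ?_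
  rw [← AddChar.map_neg_eq_conj, ← AddChar.map_add_eq_mul, dotProduct_sub, sub_eq_add_neg]

lemma inner_charVec [Finite R] (ψ : AddChar R ℂ) (C : Finset (Fin n → R)) (u v : Fin n → R) :
    inner ℂ (charVec ψ C u) (charVec ψ C v) = charSum ψ C (v - u) := by
  rw [PiLp.inner_apply, charSum, ← sum_coe_sort C]
  refine sum_congr rfl fun x _ ↦ ?_
  simp only [charVec, RCLike.inner_apply]
  rw [sub_dotProduct, sub_eq_add_neg, AddChar.map_add_eq_mul, AddChar.map_neg_eq_conj]

variable [Fintype R] [DecidableEq R]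

theorem sum_normSq_charSum {ψ : AddChar R ℂ} (hψ : ψ.IsPrimitive) (C : Finset (Fin n → R))
    {i : ℕ} (hi : i ≤ n) :
    ∑ u with hammingNorm u = i, Complex.normSq (charSum ψ C u)
      = ∑ x ∈ C, ∑ y ∈ C, kraw n (Fintype.card R) i (hammingDist x y) := by
  apply Complex.ofReal_injective
  push_cast
  simp_rw [normSq_charSum]
  rw [sum_comm]
  refine sum_congr rfl fun x _ ↦ ?_
  rw [sum_comm]
  refine sum_congr rfl fun y _ ↦ ?_
  rw [sum_addChar_dotProduct_eq_kraw hψ _ hi, hammingDist_comm, hammingDist_eq_hammingNorm,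
    neg_add_eq_sub]

theorem charSum_eq_zero_of_sum_kraw_eq_zero {ψ : AddChar R ℂ} (hψ : ψ.IsPrimitive)
    {C : Finset (Fin n → R)} {u : Fin n → R}
    (h : ∑ x ∈ C, ∑ y ∈ C, kraw n (Fintype.card R) (hammingNorm u) (hammingDist x y) = 0) :
    charSum ψ C u = 0 := by
  have hu : hammingNorm u ≤ n := by simpa using hammingNorm_le_card_fintype (x := u)
  rw [← sum_normSq_charSum hψ C hu, sum_eq_zero_iff_of_nonneg fun _ _ ↦ Complex.normSq_nonneg _]
    at h
  exact Complex.normSq_eq_zero.1 (h u (by simp))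

theorem card_hammingNorm_le_le_card {ψ : AddChar R ℂ} {C : Finset (Fin n → R)} (hC : C.Nonempty)
    {k : ℕ} (hvanish : ∀ u, 1 ≤ hammingNorm u → hammingNorm u ≤ 2 * k → charSum ψ C u = 0) :
    #{u : Fin n → R | hammingNorm u ≤ k} ≤ #C := by
  have hli : LinearIndependent ℂ fun u : {u : Fin n → R // hammingNorm u ≤ k} ↦ charVec ψ C u := by
    refine linearIndependent_of_ne_zero_of_inner_eq_zero (fun u hu ↦ ?_) fun u v huv ↦ ?_
    · have := inner_self_eq_zero (𝕜 := ℂ) |>.2 hu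
      rw [inner_charVec, sub_self, charSum_zero] at this
      exact hC.card_pos.ne' (by exact_mod_cast this)
    · dsimp only
      rw [inner_charVec]
      refine hvanish _ ?_ ?_
      · rw [Nat.one_le_iff_ne_zero, ne_eq, hammingNorm_eq_zero, sub_eq_zero]
        exact fun h ↦ huv (Subtype.ext h.symm)
      · calc hammingNorm (v.1 - u.1) = hammingDist v.1 u.1 := by
              rw [hammingDist_comm, hammingDist_eq_hammingNorm, neg_add_eq_sub]
          _ ≤ hammingDist v.1 0 + hammingDist 0 u.1 := hammingDist_triangle _ _ _
          _ ≤ 2 * k := by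
              rw [hammingDist_zero_right, hammingDist_zero_left]
              omega
  simpa [Fintype.card_subtype] using hli.fintype_card_le_finrank

end Code

lemma dualDistDistrib_mul_card_sq {n q : ℕ} (C : Finset (Fin n → Fin q)) (i : ℕ) :
    dualDistDistrib C i * (#C : ℝ) ^ 2 = ∑ x ∈ C, ∑ y ∈ C, kraw n q i (hammingDist x y) := by
  rcases C.eq_empty_or_nonempty with rfl | hC
  · simp
  have hC0 : (#C : ℝ) ≠ 0 := by exact_mod_cast hC.card_pos.ne'
  have hdist : ∀ p ∈ C ×ˢ C, hammingDist p.1 p.2 ∈ range (n + 1) := fun p _ ↦ by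
    simpa [Nat.lt_succ_iff] using hammingDist_le_card_fintype (x := p.1) (y := p.2)
  rw [← sum_product' (f := fun x y ↦ kraw n q i (hammingDist x y)),
    ← sum_fiberwise_of_maps_to hdist]
  simp only [dualDistDistrib, distDistrib]
  field_simp
  rw [mul_sum]
  refine sum_congr rfl fun j _ ↦ ?_
  rw [sum_congr rfl fun p hp ↦ by rw [(mem_filter.1 hp).2], sum_const, nsmul_eq_mul]
  field_simp

theorem rao_bound_general (n q k : ℕ) (hq : 2 ≤ q)
    (C : Finset (Fin n → Fin q)) (hC : C.Nonempty)
    -- `C` is an orthogonal array of strength `2k`: dual distance at least `2k+1`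
    (hdesign : ∀ i : ℕ, 1 ≤ i → i ≤ 2 * k → dualDistDistrib C i = 0) :
    (∑ i ∈ Finset.range (k + 1), (n.choose i : ℝ) * ((q : ℝ) - 1) ^ i) ≤ (C.card : ℝ) := by
  have : NeZero q := ⟨by omega⟩
  set e : (Fin n → Fin q) ↪ (Fin n → ZMod q) :=
    Function.Embedding.arrowCongrRight (ZMod.finEquiv q).toEmbedding
  have he : ∀ x y, hammingDist (e x) (e y) = hammingDist x y := fun x y ↦
    hammingDist_comp (fun _ ↦ ZMod.finEquiv q) fun _ ↦ (ZMod.finEquiv q).injective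
  have hvanish : ∀ u, 1 ≤ hammingNorm u → hammingNorm u ≤ 2 * k →
      charSum ZMod.stdAddChar (C.map e) u = 0 := by
    intro u h1 h2
    refine charSum_eq_zero_of_sum_kraw_eq_zero (ZMod.isPrimitive_stdAddChar q) ?_
    have := dualDistDistrib_mul_card_sq C (hammingNorm u)
    rw [hdesign _ h1 h2, zero_mul] at this
    simpa [he] using this.symm
  have hcard := card_hammingNorm_le_le_card hC.map hvanish
  rw [card_map, card_hammingNorm_le, ZMod.card] at hcard
  calc ∑ i ∈ range (k + 1), (n.choose i : ℝ) * ((q : ℝ) - 1) ^ i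
      = ((∑ i ∈ range (k + 1), n.choose i * (q - 1) ^ i : ℕ) : ℝ) := by
        push_cast [Nat.cast_sub (by omega : 1 ≤ q)]
        rfl
    _ ≤ #C := by exact_mod_cast hcard

theorem rao_bound (n q k : ℕ) (hn : 1 ≤ n) (hq : 2 ≤ q) (hk : 2 * k ≤ n)
    (C : Finset (Fin n → Fin q)) (hC : C.Nonempty)
    -- `C` is an orthogonal array of strength `2k`: dual distance at least `2k+1`
    (hdesign : ∀ i : ℕ, 1 ≤ i → i ≤ 2 * k → dualDistDistrib C i = 0) :
    (∑ i ∈ Finset.range (k + 1), (n.choose i : ℝ) * ((q : ℝ) - 1) ^ i) ≤ (C.card : ℝ) :=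
  rao_bound_general n q k hq C hC hdesign
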